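/- Let c be a positive integer, u an integer, and g : ℝ → ℂ a Schwartz function. Then Σ_{m∈ℤ, gcd(m,c)=1} e^{2πi u m̄ / c} g(m) = (1/c) Σ_{h∈ℤ} S(u, h; c) ĝ(h/c), where m̄ denotes any integer inverse of m modulo c (the left-hand term is independent of the choice), and both series converge absolutely. -/

import Mathlib

open MeasureTheory

/-- A canonical integer inverse of `m` modulo `c` (meaningful when `gcd(m,c)=1`). -/
noncomputable def intInvMod (c : ℕ) (m : ℤ) : ℤ := (((m : ZMod c)⁻¹ : ZMod c).val : ℤ)

/-- The Kloosterman sum `S(u,h;c) = ∑_{1≤x≤c, gcd(x,c)=1} e^{2πi(ux̄+hx)/c}`. -/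
noncomputable def kloostermanS (u h : ℤ) (c : ℕ) : ℂ :=
  ∑ x ∈ Finset.Icc 1 c,
    if Nat.gcd x c = 1 then
      Complex.exp (2 * Real.pi * Complex.I * ((u * intInvMod c x + h * x : ℤ) : ℂ) / c)
    else 0

/-- The Fourier transform `ĝ(ξ) = ∫_ℝ g(y) e^{-2πiξy} dy`. -/
noncomputable def fourierHat (g : ℝ → ℂ) (ξ : ℝ) : ℂ :=
  ∫ y : ℝ, g y * Complex.exp (-(2 * Real.pi * Complex.I * ξ * y))

/-!
The weight `m ↦ [gcd(m, c) = 1] e(u m̄ / c)` is `c`-periodic, so the sum over `m` splits into the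
residue classes `m = r + qc`. On each class, Poisson summation for `y ↦ g (r + c y)` gives
`∑_q g (r + qc) = c⁻¹ ∑_h ĝ(h / c) e(h r / c)`, and summing these against the weight assembles the
finite Fourier transform of the weight at `h`, which is exactly `S(u, h; c)`. Absolute convergence
comes from the rapid decay of `g` and `ĝ` together with `|S(u, h; c)| ≤ c`.
-/

open FourierTransform Real Complex Finset
open scoped SchwartzMap

lemma Real.fourier_comp_mul_right {E : Type*} [NormedAddCommGroup E] [NormedSpace ℂ E]
    (f : ℝ → E) {a : ℝ} (ha : a ≠ 0) (w : ℝ) :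
    𝓕 (fun y ↦ f (y * a)) w = |a|⁻¹ • 𝓕 f (w / a) := by
  simp only [Real.fourier_real_eq]
  have hG := Measure.integral_comp_mul_right (fun t ↦ 𝐞 (-(t * (w / a))) • f t) a
  rw [abs_inv] at hG
  rw [← hG]
  congr 1 with y
  field_simp

namespace SchwartzMap

variable {E : Type*} [NormedAddCommGroup E] [NormedSpace ℝ E]

noncomputable def compMulRight (f : 𝓢(ℝ, E)) (a : ℝˣ) : 𝓢(ℝ, E) :=
  compCLMOfContinuousLinearEquiv ℝ (ContinuousLinearEquiv.unitsEquivAut ℝ a) f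

lemma coe_compMulRight (f : 𝓢(ℝ, E)) (a : ℝˣ) : ⇑(f.compMulRight a) = fun y ↦ f (y * a) := rfl

lemma summable_norm_intCast (f : 𝓢(ℝ, E)) : Summable fun n : ℤ ↦ ‖f n‖ :=
  summable_of_isBigO (summable_abs_int_rpow one_lt_two)
    ((f.isBigO_cocompact_rpow (-2)).norm_left.comp_tendsto Int.tendsto_coe_cofinite)

lemma summable_norm_intCast_div (f : 𝓢(ℝ, E)) {c : ℝ} (hc : c ≠ 0) :
    Summable fun n : ℤ ↦ ‖f (n / c)‖ := by
  simpa [div_eq_mul_inv, coe_compMulRight] using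
    (f.compMulRight (Units.mk0 c⁻¹ (inv_ne_zero hc))).summable_norm_intCast

lemma tsum_add_mul_eq_tsum_fourier (f : 𝓢(ℝ, ℂ)) {c : ℝ} (hc : 0 < c) (x : ℝ) :
    ∑' n : ℤ, f (x + n * c) =
      c⁻¹ * ∑' h : ℤ, 𝓕 f (h / c) * exp (2 * π * I * h * x / c) := by
  have hpoisson := (f.compMulRight (Units.mk0 c hc.ne')).tsum_eq_tsum_fourier (x / c)
  simp only [fourier_coe, coe_compMulRight, Units.val_mk0,
    Real.fourier_comp_mul_right _ hc.ne', abs_of_pos hc, fourier_coe_apply] at hpoisson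
  calc ∑' n : ℤ, f (x + n * c) = ∑' n : ℤ, f ((x / c + n) * c) := by
        simp only [add_mul, div_mul_cancel₀ x hc.ne']
    _ = _ := hpoisson
    _ = _ := by
        rw [← tsum_mul_left]
        congr 1 with h
        rw [fourier_coe, Complex.real_smul]
        push_cast
        field_simp

end SchwartzMap

lemma tsum_int_eq_sum_range_tsum_mul_add {E : Type*} [NormedAddCommGroup E] [CompleteSpace E]
    (c : ℕ) [NeZero c] {F : ℤ → E} (hF : Summable F) :
    ∑' m : ℤ, F m = ∑ r ∈ range c, ∑' q : ℤ, F (q * c + r) := by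
  let e : Fin c × ℤ ≃ ℤ := (Equiv.prodComm _ _).trans (Int.divModEquiv c).symm
  have hFe : Summable (F ∘ e) := e.summable_iff.mpr hF
  calc ∑' m : ℤ, F m = ∑' p, (F ∘ e) p := (e.tsum_eq F).symm
    _ = ∑' (r : Fin c) (q : ℤ), F (q * c + r) := hFe.tsum_prod' hFe.prod_factor
    _ = _ := by
        rw [tsum_fintype]
        exact Fin.sum_univ_eq_sum_range (fun r ↦ ∑' q : ℤ, F (q * c + r)) c

lemma Function.Periodic.norm_le_sum_range {E : Type*} [NormedAddCommGroup E] {φ : ℤ → E} {c : ℕ}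
    (hφ : Function.Periodic φ c) (hc : 0 < c) (m : ℤ) :
    ‖φ m‖ ≤ ∑ r ∈ range c, ‖φ r‖ := by
  obtain ⟨y, ⟨hy0, hyc⟩, hy⟩ := hφ.exists_mem_Ico₀ (by exact_mod_cast hc) m
  lift y to ℕ using hy0
  rw [hy]
  exact single_le_sum (f := fun r : ℕ ↦ ‖φ r‖) (fun _ _ ↦ norm_nonneg _)
    (mem_range.mpr (by exact_mod_cast hyc))

lemma norm_exp_two_pi_I_mul_mul_div (x y c : ℝ) : ‖exp (2 * π * I * x * y / c)‖ = 1 := by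
  rw [show 2 * π * I * x * y / c = ((2 * π * x * y / c : ℝ) : ℂ) * I by push_cast; ring]
  exact norm_exp_ofReal_mul_I _

noncomputable def discreteFourier (c : ℕ) (φ : ℤ → ℂ) (h : ℤ) : ℂ :=
  ∑ r ∈ range c, φ r * exp (2 * π * I * h * r / c)

lemma norm_discreteFourier_le (c : ℕ) (φ : ℤ → ℂ) (h : ℤ) :
    ‖discreteFourier c φ h‖ ≤ ∑ r ∈ range c, ‖φ r‖ := by
  refine (norm_sum_le _ _).trans (sum_le_sum fun r _ ↦ ?_)
  rw [norm_mul, (by exact_mod_cast norm_exp_two_pi_I_mul_mul_div h r c :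
    ‖exp (2 * π * I * h * r / c)‖ = 1), mul_one]

lemma summable_norm_discreteFourier_mul_fourier (c : ℕ) [NeZero c] (φ : ℤ → ℂ) (g : 𝓢(ℝ, ℂ)) :
    Summable fun h : ℤ ↦ ‖discreteFourier c φ h * 𝓕 g (h / c)‖ :=
  ((𝓕 g).summable_norm_intCast_div (NeZero.ne (c : ℝ))).mul_left (∑ r ∈ range c, ‖φ r‖)
    |>.of_nonneg_of_le (fun _ ↦ norm_nonneg _) fun h ↦ by
      rw [norm_mul]
      exact mul_le_mul_of_nonneg_right (norm_discreteFourier_le c φ h) (norm_nonneg _)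

namespace Function.Periodic

variable {c : ℕ} [NeZero c] {φ : ℤ → ℂ} (hφ : Periodic φ c) (g : 𝓢(ℝ, ℂ))
include hφ

lemma summable_norm_mul_schwartz : Summable fun m : ℤ ↦ ‖φ m * g m‖ :=
  (g.summable_norm_intCast.mul_left (∑ r ∈ range c, ‖φ r‖)).of_nonneg_of_le
    (fun _ ↦ norm_nonneg _) fun m ↦ by
      rw [norm_mul]
      exact mul_le_mul_of_nonneg_right (hφ.norm_le_sum_range (NeZero.pos c) m) (norm_nonneg _)

lemma tsum_mul_schwartz_eq :
    ∑' m : ℤ, φ m * g m = (c : ℂ)⁻¹ * ∑' h : ℤ, discreteFourier c φ h * 𝓕 g (h / c) := by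
  have hc : (0 : ℝ) < c := by exact_mod_cast NeZero.pos c
  have hsummable (r : ℕ) :
      Summable fun h : ℤ ↦ φ r * (𝓕 g (h / c) * exp (2 * π * I * h * r / c)) := by
    refine (((𝓕 g).summable_norm_intCast_div hc.ne').mul_left ‖φ r‖).of_norm_bounded fun h ↦ ?_
    rw [norm_mul, norm_mul, (by exact_mod_cast norm_exp_two_pi_I_mul_mul_div h r c :
      ‖exp (2 * π * I * h * r / c)‖ = 1), mul_one]
  calc ∑' m : ℤ, φ m * g m
      = ∑ r ∈ range c, ∑' q : ℤ, φ (q * c + r) * g ((q * c + r : ℤ) : ℝ) :=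
        tsum_int_eq_sum_range_tsum_mul_add c (hφ.summable_norm_mul_schwartz g).of_norm
    _ = ∑ r ∈ range c, φ r * ∑' q : ℤ, g (r + q * c) := by
        refine sum_congr rfl fun r _ ↦ ?_
        rw [← tsum_mul_left]
        congr 1 with q
        rw [add_comm, show φ (r + q * c) = φ r by simpa using hφ.int_mul q r]
        push_cast
        rfl
    _ = (c : ℂ)⁻¹ * ∑ r ∈ range c, ∑' h : ℤ,
          φ r * (𝓕 g (h / c) * exp (2 * π * I * h * r / c)) := by
        rw [mul_sum]
        refine sum_congr rfl fun r _ ↦ ?_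
        rw [g.tsum_add_mul_eq_tsum_fourier hc, tsum_mul_left]
        push_cast
        ring
    _ = (c : ℂ)⁻¹ * ∑' h : ℤ, ∑ r ∈ range c,
          φ r * (𝓕 g (h / c) * exp (2 * π * I * h * r / c)) := by
        rw [Summable.tsum_finsetSum fun r _ ↦ hsummable r]
    _ = (c : ℂ)⁻¹ * ∑' h : ℤ, discreteFourier c φ h * 𝓕 g (h / c) := by
        congr 2 with h
        rw [discreteFourier, sum_mul]
        exact sum_congr rfl fun r _ ↦ by ring

end Function.Periodic

lemma Finset.sum_Icc_one_eq_sum_range {M : Type*} [AddCommMonoid M] {f : ℕ → M} {c : ℕ}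
    (hf : f c = f 0) : ∑ x ∈ Icc 1 c, f x = ∑ x ∈ range c, f x := by
  rw [← Ico_add_one_right_eq_Icc, sum_Ico_eq_sum_range, Nat.add_sub_cancel]
  simp_rw [add_comm 1]
  cases c with
  | zero => simp
  | succ k => rw [sum_range_succ, sum_range_succ' f, hf]

noncomputable def kloostermanWeight (c : ℕ) (u m : ℤ) : ℂ :=
  if Int.gcd m c = 1 then exp (2 * π * I * ((u * intInvMod c m : ℤ) : ℂ) / c) else 0

lemma periodic_kloostermanWeight (c : ℕ) (u : ℤ) : Function.Periodic (kloostermanWeight c u) c := by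
  intro m
  have hinv : intInvMod c (m + c) = intInvMod c m := by
    simp [intInvMod]
  simp only [kloostermanWeight, Int.gcd_add_self_left, hinv]

lemma kloostermanS_eq_discreteFourier (u h : ℤ) (c : ℕ) :
    kloostermanS u h c = discreteFourier c (kloostermanWeight c u) h := by
  have hterm (x : ℕ) :
      (if Nat.gcd x c = 1 then
        exp (2 * π * I * ((u * intInvMod c x + h * x : ℤ) : ℂ) / c) else 0) =
        kloostermanWeight c u x * exp (2 * π * I * h * x / c) := by
    rw [kloostermanWeight, Int.gcd_natCast_natCast]
    split_ifs
    · rw [← Complex.exp_add]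
      congr 1
      push_cast
      ring
    · rw [zero_mul]
  have hexp : exp (2 * π * I * h * c / c) = exp (2 * π * I * h * (0 : ℕ) / c) := by
    rcases eq_or_ne c 0 with rfl | hc
    · rfl
    rw [Nat.cast_zero, mul_zero, zero_div, Complex.exp_zero, ← exp_int_mul_two_pi_mul_I h]
    congr 1
    field_simp
  simp only [kloostermanS, discreteFourier, hterm]
  exact sum_Icc_one_eq_sum_range (by rw [(periodic_kloostermanWeight c u).eq, hexp]; rfl)

lemma fourierHat_eq_fourier (g : ℝ → ℂ) : fourierHat g = 𝓕 g := by
  ext ξ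
  rw [fourierHat, Real.fourier_real_eq_integral_exp_smul]
  congr 1 with y
  rw [smul_eq_mul, mul_comm]
  push_cast
  ring_nf

/-- Poisson summation producing Kloosterman sums: for a Schwartz function `g`,
`∑_{gcd(m,c)=1} e^{2πium̄/c} g(m) = (1/c) ∑_h S(u,h;c) ĝ(h/c)`,
both series converging absolutely. -/
theorem poisson_kloosterman
    (c : ℕ) (hc : 0 < c) (u : ℤ) (g : SchwartzMap ℝ ℂ) :
    Summable (fun m : ℤ =>
      ‖if Int.gcd m c = 1 then
          Complex.exp (2 * Real.pi * Complex.I * ((u * intInvMod c m : ℤ) : ℂ) / c) * g m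
        else 0‖) ∧
    Summable (fun h : ℤ => ‖kloostermanS u h c * fourierHat g ((h : ℝ) / c)‖) ∧
    (∑' m : ℤ,
        if Int.gcd m c = 1 then
          Complex.exp (2 * Real.pi * Complex.I * ((u * intInvMod c m : ℤ) : ℂ) / c) * g m
        else 0) =
      (1 / (c : ℂ)) * ∑' h : ℤ, kloostermanS u h c * fourierHat g ((h : ℝ) / c) := by
  have : NeZero c := ⟨hc.ne'⟩
  have hφ := periodic_kloostermanWeight c u
  have hweight (m : ℤ) :
      (if Int.gcd m c = 1 then exp (2 * π * I * ((u * intInvMod c m : ℤ) : ℂ) / c) * g m else 0) =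
        kloostermanWeight c u m * g m := by
    rw [kloostermanWeight, ite_mul, zero_mul]
  simp only [hweight, kloostermanS_eq_discreteFourier, fourierHat_eq_fourier,
    ← SchwartzMap.fourier_coe, one_div]
  exact ⟨hφ.summable_norm_mul_schwartz g, summable_norm_discreteFourier_mul_fourier c _ g,
    hφ.tsum_mul_schwartz_eq g⟩
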